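/- arXiv:1603.02562 — 2 statements merged into one kernel-verified Lean document; each statement's English description precedes it below -/
import Mathlib

section
/- If q ≥ 3, then the metric dimension of the non-zero component graph Γ(V) equals Σ_{k=1}^{n} C(n,k)((q−1)^k − 1), where C(n,k) is the binomial coefficient. -/
/-!
The graph has diameter two (the all-ones vector is adjacent to every other vertex), so the
distance from `u` to `w ≠ u` only records whether `u` and `w` are adjacent, and adjacency only
sees supports. Hence two vertices outside a resolving set `W` with the same support are not
separated by `W`, and `|Wᶜ| ≤ 2ⁿ - 1`. Conversely, for `q ≥ 3` the vectors having an entry outside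
`{0, 1}` form a resolving set whose complement, the nonzero `0/1`-vectors, has exactly `2ⁿ - 1`
elements. So the metric dimension is `qⁿ - 2ⁿ`, which is the binomial sum by the binomial theorem.
-/

/-- `W` is a resolving set of `G`: distinct vertices have distinct distance vectors to `W`. -/
def Resolves {α : Type*} (G : SimpleGraph α) (W : Set α) : Prop :=
  ∀ u v : α, (∀ w ∈ W, G.dist u w = G.dist v w) → u = v

/-- The metric dimension of `G`: minimum cardinality of a resolving set. -/
noncomputable def metricDim {α : Type*} (G : SimpleGraph α) : ℕ :=
  sInf {k | ∃ W : Set α, W.ncard = k ∧ Resolves G W}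

/-- A minimal resolving set: no proper subset resolves. -/
def MinimalResolves {α : Type*} (G : SimpleGraph α) (W : Set α) : Prop :=
  Resolves G W ∧ ∀ W' ⊂ W, ¬ Resolves G W'

/-- The exchange property for minimal resolving sets. -/
def ExchangeProperty {α : Type*} (G : SimpleGraph α) : Prop :=
  ∀ W₁ W₂ : Set α, MinimalResolves G W₁ → MinimalResolves G W₂ →
    ∀ r ∈ W₁, ∃ s ∈ W₂, MinimalResolves G (insert r (W₂ \ {s}))

/-- `u` and `v` are twins: equal open neighborhoods or equal closed neighborhoods. -/
def Twins {α : Type*} (G : SimpleGraph α) (u v : α) : Prop :=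
  G.neighborSet u = G.neighborSet v ∨
    insert u (G.neighborSet u) = insert v (G.neighborSet v)

/-- The non-zero component graph of `Fin n → F` with respect to the standard basis:
vertices are the non-zero vectors, adjacency means the supports (skeletons) intersect. -/
def NZCGraph (F : Type*) [Field F] (n : ℕ) :
    SimpleGraph {v : Fin n → F // v ≠ 0} where
  Adj u v := u ≠ v ∧ ∃ i, (u : Fin n → F) i ≠ 0 ∧ (v : Fin n → F) i ≠ 0
  symm := ⟨by
    rintro u v ⟨h, i, hu, hv⟩
    exact ⟨h.symm, i, hv, hu⟩⟩
  loopless := ⟨by rintro u ⟨h, _⟩; exact h rfl⟩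

namespace SimpleGraph

variable {α : Type*} {G : SimpleGraph α} {u v : α}

theorem dist_eq_two_of_not_adj (huv : u ≠ v) (hadj : ¬G.Adj u v)
    (hc : (G.commonNeighbors u v).Nonempty) : G.dist u v = 2 := by
  rw [dist, edist_eq_two_iff.mpr ⟨huv, hadj, hc⟩]
  rfl

theorem dist_eq_ite_of_commonNeighbors
    (hG : ∀ u v, u ≠ v → ¬G.Adj u v → (G.commonNeighbors u v).Nonempty) (huv : u ≠ v)
    [Decidable (G.Adj u v)] : G.dist u v = if G.Adj u v then 1 else 2 := by
  split_ifs with hadj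
  · exact dist_eq_one_iff_adj.mpr hadj
  · exact dist_eq_two_of_not_adj huv hadj (hG u v huv hadj)

-- `hG` says that `G` has diameter at most two, so the distance to `w` only records adjacency.
theorem resolves_iff_of_commonNeighbors
    (hG : ∀ u v, u ≠ v → ¬G.Adj u v → (G.commonNeighbors u v).Nonempty) {W : Set α} :
    Resolves G W ↔ ∀ u ∉ W, ∀ v ∉ W, (∀ w ∈ W, G.Adj u w ↔ G.Adj v w) → u = v := by
  classical
  have hdist {x y : α} (hxy : x ≠ y) := dist_eq_ite_of_commonNeighbors hG hxy
  constructor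
  · intro hW u hu v hv hadj
    refine hW u v fun w hw => ?_
    rw [hdist (ne_of_mem_of_not_mem hw hu).symm, hdist (ne_of_mem_of_not_mem hw hv).symm,
      if_congr (hadj w hw) rfl rfl]
  · intro h u v hd
    by_contra huv
    have hu : u ∉ W := fun hu => by
      have := hd u hu
      rw [dist_self, hdist (Ne.symm huv)] at this
      split_ifs at this
    have hv : v ∉ W := fun hv => by
      have := hd v hv
      rw [dist_self, hdist huv] at this
      split_ifs at this
    refine huv (h u hu v hv fun w hw => ?_)
    have := hd w hw
    rw [hdist (ne_of_mem_of_not_mem hw hu).symm, hdist (ne_of_mem_of_not_mem hw hv).symm] at this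
    split_ifs at this <;> simp_all

end SimpleGraph

namespace NZCGraph

open Function SimpleGraph

variable {F : Type*} [Field F] {n : ℕ}

theorem commonNeighbors_nonempty {u v : {v : Fin n → F // v ≠ 0}} (huv : u ≠ v)
    (hadj : ¬(NZCGraph F n).Adj u v) : ((NZCGraph F n).commonNeighbors u v).Nonempty := by
  obtain ⟨i, hi⟩ := Function.ne_iff.mp u.2
  obtain ⟨j, hj⟩ := Function.ne_iff.mp v.2
  have hone : (fun _ => 1 : Fin n → F) ≠ 0 := Function.ne_iff.mpr ⟨i, one_ne_zero⟩
  refine ⟨⟨_, hone⟩, (mem_commonNeighbors _).mpr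
    ⟨⟨?_, i, hi, one_ne_zero⟩, ⟨?_, j, hj, one_ne_zero⟩⟩⟩
  · rintro rfl
    exact hadj ⟨huv, j, one_ne_zero, hj⟩
  · rintro rfl
    exact hadj ⟨huv, i, hi, one_ne_zero⟩

theorem resolves_iff {W : Set {v : Fin n → F // v ≠ 0}} :
    Resolves (NZCGraph F n) W ↔ ∀ u ∉ W, ∀ v ∉ W,
      (∀ w ∈ W, (NZCGraph F n).Adj u w ↔ (NZCGraph F n).Adj v w) → u = v :=
  resolves_iff_of_commonNeighbors fun _ _ => commonNeighbors_nonempty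

theorem _root_.Resolves.injOn_support {W : Set {v : Fin n → F // v ≠ 0}}
    (hW : Resolves (NZCGraph F n) W) :
    Set.InjOn (fun v : {v : Fin n → F // v ≠ 0} => support v.1) Wᶜ := by
  intro u hu v hv huv
  refine resolves_iff.mp hW u hu v hv fun w hw => ?_
  have hsupp (i : Fin n) : u.1 i ≠ 0 ↔ v.1 i ≠ 0 := Set.ext_iff.mp huv i
  exact ⟨fun ⟨_, i, hui, hwi⟩ => ⟨(ne_of_mem_of_not_mem hw hv).symm, i, (hsupp i).mp hui, hwi⟩,
    fun ⟨_, i, hvi, hwi⟩ => ⟨(ne_of_mem_of_not_mem hw hu).symm, i, (hsupp i).mpr hvi, hwi⟩⟩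

def nonBinary (F : Type*) [Field F] (n : ℕ) : Set {v : Fin n → F // v ≠ 0} :=
  {v | ∃ i, v.1 i ≠ 0 ∧ v.1 i ≠ 1}

theorem adj_single_iff {c : F} (hc : c ≠ 0) (i : Fin n) {u : {v : Fin n → F // v ≠ 0}}
    (hu : u.1 ≠ Pi.single i c) :
    (NZCGraph F n).Adj u ⟨Pi.single i c, by simpa using hc⟩ ↔ u.1 i ≠ 0 := by
  refine ⟨fun ⟨_, j, huj, hj⟩ => ?_,
    fun hui => ⟨fun h => hu (congrArg Subtype.val h), i, hui, by simpa using hc⟩⟩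
  obtain rfl : j = i := by by_contra hji; exact hj (by simp [hji])
  exact huj

theorem support_ne_empty (v : {v : Fin n → F // v ≠ 0}) : support v.1 ≠ ∅ :=
  support_eq_empty_iff.not.mpr v.2

-- Vectors outside `nonBinary` are `0/1`-vectors; `c • eᵢ ∈ nonBinary` is adjacent to such a vector
-- iff its `i`-th entry is nonzero, which for a `0/1`-vector determines that entry.
theorem nonBinary_resolves {c : F} (hc0 : c ≠ 0) (hc1 : c ≠ 1) :
    Resolves (NZCGraph F n) (nonBinary F n) := by
  refine resolves_iff.mpr fun u hu v hv hadj => Subtype.ext (funext fun i => ?_)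
  simp only [nonBinary, Set.mem_ofPred_eq, not_exists, not_and, not_not] at hu hv
  have hw : ⟨Pi.single i c, by simpa using hc0⟩ ∈ nonBinary F n := ⟨i, by simp [hc0, hc1]⟩
  have hne {x : {v : Fin n → F // v ≠ 0}} (hx : ∀ j, x.1 j ≠ 0 → x.1 j = 1) :
      x.1 ≠ Pi.single i c := fun h => hc1 (by simpa [h, hc0] using hx i)
  have hzero : u.1 i ≠ 0 ↔ v.1 i ≠ 0 := by
    rw [← adj_single_iff hc0 i (hne hu), ← adj_single_iff hc0 i (hne hv)]
    exact hadj _ hw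
  by_cases hui : u.1 i = 0
  · rw [hui, eq_comm]; simpa using hzero.not.mp (not_not.mpr hui)
  · rw [hu i hui, hv i (hzero.mp hui)]

section Counting

variable [Fintype F]

theorem card_vertices : Nat.card {v : Fin n → F // v ≠ 0} = Fintype.card F ^ n - 1 := by
  classical
  have h := Set.card_ne_eq (0 : Fin n → F)
  rwa [Fintype.card_fun, Fintype.card_fin, ← Nat.card_eq_fintype_card] at h

theorem ncard_compl_add_ncard (W : Set {v : Fin n → F // v ≠ 0}) :
    W.ncard + Wᶜ.ncard = Fintype.card F ^ n - 1 := by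
  rw [Set.ncard_add_ncard_compl, card_vertices]

theorem ncard_nonempty_subsets : ({∅}ᶜ : Set (Set (Fin n))).ncard = 2 ^ n - 1 := by
  rw [Set.ncard_compl, Set.ncard_singleton, Nat.card_eq_fintype_card, Fintype.card_set,
    Fintype.card_fin]

theorem _root_.Resolves.ncard_ge {W : Set {v : Fin n → F // v ≠ 0}}
    (hW : Resolves (NZCGraph F n) W) : Fintype.card F ^ n - 2 ^ n ≤ W.ncard := by
  have hcompl : Wᶜ.ncard ≤ 2 ^ n - 1 := by
    rw [← ncard_nonempty_subsets, ← hW.injOn_support.ncard_image]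
    exact Set.ncard_le_ncard (Set.image_subset_iff.mpr fun v _ => support_ne_empty v)
  have := ncard_compl_add_ncard W
  have := Nat.one_le_two_pow (n := n)
  omega

theorem ncard_nonBinary_le : (nonBinary F n).ncard ≤ Fintype.card F ^ n - 2 ^ n := by
  classical
  have hcompl : 2 ^ n - 1 ≤ (nonBinary F n)ᶜ.ncard := by
    rw [← ncard_nonempty_subsets]
    refine (Set.ncard_le_ncard fun S hS => ?_).trans
      (Set.ncard_image_le (f := fun v : {v : Fin n → F // v ≠ 0} => support v.1))
    obtain ⟨i, hi⟩ := Set.nonempty_iff_ne_empty.mpr hS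
    refine ⟨⟨fun j => if j ∈ S then 1 else 0, Function.ne_iff.mpr ⟨i, by simp [hi]⟩⟩, ?_, ?_⟩
    · simp only [nonBinary, Set.mem_compl_iff, Set.mem_ofPred_eq, not_exists, not_and]
      intro j
      split_ifs <;> simp
    · ext j
      by_cases hj : j ∈ S <;> simp [hj]
  have := ncard_compl_add_ncard (nonBinary F n)
  omega

theorem metricDim_eq {c : F} (hc0 : c ≠ 0) (hc1 : c ≠ 1) :
    metricDim (NZCGraph F n) = Fintype.card F ^ n - 2 ^ n := by
  have hmem : (nonBinary F n).ncard ∈ {k | ∃ W, W.ncard = k ∧ Resolves (NZCGraph F n) W} :=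
    ⟨_, rfl, nonBinary_resolves hc0 hc1⟩
  apply le_antisymm
  · exact (Nat.sInf_le hmem).trans ncard_nonBinary_le
  · refine le_csInf ⟨_, hmem⟩ ?_
    rintro _ ⟨W, rfl, hW⟩
    exact hW.ncard_ge

end Counting

end NZCGraph

theorem Nat.sum_Icc_choose_mul_pred_pow_sub_one {q : ℕ} (hq : 2 ≤ q) (n : ℕ) :
    ∑ k ∈ Finset.Icc 1 n, n.choose k * ((q - 1) ^ k - 1) = q ^ n - 2 ^ n := by
  have hpow (k : ℕ) : 1 ≤ (q - 1) ^ k := Nat.one_le_pow _ _ (by omega)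
  calc ∑ k ∈ Finset.Icc 1 n, n.choose k * ((q - 1) ^ k - 1)
      = ∑ k ∈ Finset.range (n + 1), n.choose k * ((q - 1) ^ k - 1) := by
        refine Finset.sum_subset (fun k hk => ?_) fun k hkn hk => ?_
        · simp only [Finset.mem_Icc, Finset.mem_range] at hk ⊢; omega
        · obtain rfl : k = 0 := by
            simp only [Finset.mem_Icc, Finset.mem_range] at hk hkn; omega
          simp
    _ = ∑ k ∈ Finset.range (n + 1), (q - 1) ^ k * n.choose k
          - ∑ k ∈ Finset.range (n + 1), n.choose k := by
        rw [← Finset.sum_tsub_distrib _ fun k _ => Nat.le_mul_of_pos_left _ (hpow k)]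
        refine Finset.sum_congr rfl fun k _ => ?_
        rw [Nat.mul_sub_one, mul_comm]
    _ = q ^ n - 2 ^ n := by
        rw [Nat.sum_range_choose, ← Nat.sub_add_cancel (by omega : 1 ≤ q), add_pow]
        simp

theorem stmt9 (q n : ℕ) (F : Type*) [Field F] [Fintype F] (hq : Fintype.card F = q)
    (h3 : 3 ≤ q) :
    metricDim (NZCGraph F n) = ∑ k ∈ Finset.Icc 1 n, n.choose k * ((q - 1) ^ k - 1) := by
  classical
  obtain ⟨c, -, hc⟩ := Finset.exists_mem_notMem_of_card_lt_card (s := {0, 1})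
    (t := (Finset.univ : Finset F))
    (by rw [Finset.card_univ, hq]; exact Finset.card_le_two.trans_lt (by omega))
  simp only [Finset.mem_insert, Finset.mem_singleton, not_or] at hc
  rw [NZCGraph.metricDim_eq hc.1 hc.2, hq, Nat.sum_Icc_choose_mul_pred_pow_sub_one (by omega)]
end

section
/- If q ≥ 3, then every minimum resolving set of the non-zero component graph Γ(V) contains a basis of the vector space V. -/
/-!
Two non-zero vectors with the same skeleton, such as `eᵢ` and `a • eᵢ` with `a ∉ {0, 1}` (this is
where `q ≥ 3` enters), are at the same distance from every third vertex, because the graph has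
diameter two and adjacency only depends on skeletons. So a resolving set must contain one of them,
i.e. a non-zero multiple of every `eᵢ`, and these multiples form a basis.
-/

open Function

lemma Resolves.mem_or_mem_of_dist_eq {α : Type*} {G : SimpleGraph α} {W : Set α}
    (hW : Resolves G W) {u v : α} (huv : u ≠ v)
    (h : ∀ w, w ≠ u → w ≠ v → G.dist u w = G.dist v w) : u ∈ W ∨ v ∈ W := by
  by_contra! ⟨hu, hv⟩
  exact huv (hW u v fun w hw => h w (ne_of_mem_of_not_mem hw hu) (ne_of_mem_of_not_mem hw hv))

lemma Fintype.exists_ne_zero_ne_one {α : Type*} [Zero α] [One α] [Fintype α]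
    (h : 2 < Fintype.card α) : ∃ a : α, a ≠ 0 ∧ a ≠ 1 := by
  classical
  have hlt : ({0, 1} : Finset α).card < (Finset.univ : Finset α).card :=
    Finset.card_le_two.trans_lt (by rwa [Finset.card_univ])
  obtain ⟨a, -, ha⟩ := Finset.exists_mem_notMem_of_card_lt_card hlt
  simp only [Finset.mem_insert, Finset.mem_singleton, not_or] at ha
  exact ⟨a, ha⟩

namespace NZCGraph

variable {F : Type*} [Field F] {n : ℕ}

lemma dist_eq_two {u v : {v : Fin n → F // v ≠ 0}} (huv : u ≠ v)
    (hadj : ¬ (NZCGraph F n).Adj u v) : (NZCGraph F n).dist u v = 2 := by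
  obtain ⟨i, hui⟩ : ∃ i, (u : Fin n → F) i ≠ 0 := Function.ne_iff.1 u.2
  obtain ⟨j, hvj⟩ : ∃ j, (v : Fin n → F) j ≠ 0 := Function.ne_iff.1 v.2
  have hvi : (v : Fin n → F) i = 0 := by_contra fun hvi => hadj ⟨huv, i, hui, hvi⟩
  have huj : (u : Fin n → F) j = 0 := by_contra fun huj => hadj ⟨huv, j, huj, hvj⟩
  -- `u + v` shares a coordinate with each of `u` and `v`
  let z : {v : Fin n → F // v ≠ 0} :=
    ⟨u + v, fun h => hui (by simpa [hvi] using congrFun h i)⟩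
  have hzi : (z : Fin n → F) i = (u : Fin n → F) i := by simp [z, hvi]
  have hzj : (z : Fin n → F) j = (v : Fin n → F) j := by simp [z, huj]
  have huz : (NZCGraph F n).Adj u z :=
    ⟨fun h => hvj (by rw [← hzj, ← h, huj]), i, hui, hzi ▸ hui⟩
  have hzv : (NZCGraph F n).Adj z v :=
    ⟨fun h => hui (by rw [← hzi, h, hvi]), j, hzj ▸ hvj, hvj⟩
  let p := SimpleGraph.Walk.cons huz (SimpleGraph.Walk.cons hzv SimpleGraph.Walk.nil)
  have hle : (NZCGraph F n).dist u v ≤ 2 := SimpleGraph.dist_le p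
  have hr : (NZCGraph F n).Reachable u v := ⟨p⟩
  have h0 : (NZCGraph F n).dist u v ≠ 0 := fun h => huv (hr.dist_eq_zero_iff.1 h)
  have h1 : (NZCGraph F n).dist u v ≠ 1 := fun h => hadj (SimpleGraph.dist_eq_one_iff_adj.1 h)
  omega

lemma dist_eq_of_support_eq {u v w : {v : Fin n → F // v ≠ 0}}
    (hsupp : support (u : Fin n → F) = support (v : Fin n → F)) (hwu : w ≠ u) (hwv : w ≠ v) :
    (NZCGraph F n).dist u w = (NZCGraph F n).dist v w := by
  have hadj : (NZCGraph F n).Adj u w ↔ (NZCGraph F n).Adj v w := by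
    have hmem : ∀ i, (u : Fin n → F) i ≠ 0 ↔ (v : Fin n → F) i ≠ 0 := fun i => by
      simp only [← mem_support, hsupp]
    simp only [NZCGraph, hmem, hwu.symm, hwv.symm, ne_eq, not_false_eq_true, true_and]
  by_cases huw : (NZCGraph F n).Adj u w
  · rw [SimpleGraph.dist_eq_one_iff_adj.2 huw, SimpleGraph.dist_eq_one_iff_adj.2 (hadj.1 huw)]
  · rw [dist_eq_two hwu.symm huw, dist_eq_two hwv.symm (hadj.not.1 huw)]

lemma exists_single_mem_of_resolves {a : F} (ha0 : a ≠ 0) (ha1 : a ≠ 1)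
    {W : Set {v : Fin n → F // v ≠ 0}} (hW : Resolves (NZCGraph F n) W) (i : Fin n) :
    ∃ d : F, d ≠ 0 ∧ Pi.single i d ∈ Subtype.val '' W := by
  let u : {v : Fin n → F // v ≠ 0} := ⟨Pi.single i 1, Pi.single_eq_zero_iff.not.2 one_ne_zero⟩
  let v : {v : Fin n → F // v ≠ 0} := ⟨Pi.single i a, Pi.single_eq_zero_iff.not.2 ha0⟩
  have huv : u ≠ v := fun h => ha1 (Pi.single_injective i (congrArg Subtype.val h)).symm
  have hsupp : support (u : Fin n → F) = support (v : Fin n → F) := by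
    rw [Pi.support_single_of_ne one_ne_zero, Pi.support_single_of_ne ha0]
  rcases hW.mem_or_mem_of_dist_eq huv fun w hwu hwv => dist_eq_of_support_eq hsupp hwu hwv
    with hu | hv
  · exact ⟨1, one_ne_zero, u, hu, rfl⟩
  · exact ⟨a, ha0, v, hv, rfl⟩

end NZCGraph

theorem stmt11_general (q n : ℕ) (F : Type*) [Field F] [Fintype F] (hq : Fintype.card F = q)
    (h3 : 3 ≤ q) (W : Set {v : Fin n → F // v ≠ 0})
    (hW : Resolves (NZCGraph F n) W) :
    ∃ B ⊆ Subtype.val '' W, Submodule.span F B = ⊤ ∧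
      LinearIndependent F (fun x : B => (x : Fin n → F)) := by
  obtain ⟨a, ha0, ha1⟩ := Fintype.exists_ne_zero_ne_one (α := F) (by omega)
  choose d hd hmem using NZCGraph.exists_single_mem_of_resolves ha0 ha1 hW
  let b := (Pi.basisFun F (Fin n)).unitsSMul fun i => Units.mk0 (d i) (hd i)
  have hb : ∀ i, b i = Pi.single i (d i) := fun i => by
    rw [Module.Basis.unitsSMul_apply, Pi.basisFun_apply, Units.smul_mk0, ← Pi.single_smul,
      smul_eq_mul, mul_one]
  refine ⟨Set.range b, ?_, b.span_eq, b.linearIndependent.linearIndepOn_id⟩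
  rintro _ ⟨i, rfl⟩
  exact hb i ▸ hmem i

theorem stmt11 (q n : ℕ) (F : Type*) [Field F] [Fintype F] (hq : Fintype.card F = q)
    (h3 : 3 ≤ q) (W : Set {v : Fin n → F // v ≠ 0})
    (hW : Resolves (NZCGraph F n) W)
    (hcard : W.ncard = metricDim (NZCGraph F n)) :
    ∃ B ⊆ Subtype.val '' W, Submodule.span F B = ⊤ ∧
      LinearIndependent F (fun x : B => (x : Fin n → F)) :=
  stmt11_general q n F hq h3 W hW
end
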